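/- Let m ≥ 4, let Γ be the alternating group on Fin m (viewed as a subgroup of Perm(Fin m)), and let a : Fin m → ℕ with a(i) ≥ 2 for all i. Then the least n ∈ ℕ such that every m-edge-colouring of the complete graph on n vertices is Γ-switch equivalent to a colouring containing, for some i ∈ Fin m, a monochromatic K_{a(i)} of colour i, equals min_{i ∈ Fin m} a(i). -/

import Mathlib

open scoped Classical in
/-- Switch the edge-colouring `c` at vertex `v` with permutation `π`: every edge
incident with `v` has its colour replaced by its image under `π`. -/
noncomputable def switchAt {V K : Type*} (c : Sym2 V → K) (π : Equiv.Perm K) (v : V) :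
    Sym2 V → K :=
  fun s => if v ∈ s then π (c s) else c s

/-- Two colourings are `Γ`-switch equivalent if one is obtained from the other by a
finite sequence of switches at vertices with permutations from `Γ`. -/
def SwitchEquiv {V K : Type*} (Γ : Subgroup (Equiv.Perm K)) (c c' : Sym2 V → K) : Prop :=
  Relation.ReflTransGen (fun d d' => ∃ π ∈ Γ, ∃ v : V, d' = switchAt d π v) c c'

/-- The colouring `c` contains a monochromatic complete graph on `t` vertices of colour `i`. -/
def HasMonoK {V K : Type*} (c : Sym2 V → K) (i : K) (t : ℕ) : Prop :=
  ∃ S : Finset V, S.card = t ∧ ∀ x ∈ S, ∀ y ∈ S, x ≠ y → c s(x, y) = i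

/-!
Switching at `v`, `u`, `v`, `u` with `h⁻¹`, `g⁻¹`, `h`, `g` cancels on every edge except `uv`,
whose colour is moved by the commutator `⁅g, h⁆`. For `m ≥ 4` the commutators of `A_m` map any
colour to any other, so each edge can be recoloured individually and every colouring of `K_n` is
switch equivalent to one that is monochromatic in a colour `i₀` minimising `a`. Hence
`n = min a` suffices, while fewer than `a i` vertices never carry a `K_{a i}`.
-/

namespace SwitchEquiv

variable {V K : Type*} {Γ : Subgroup (Equiv.Perm K)}

theorem single_switchAt {c : Sym2 V → K} {π : Equiv.Perm K} (hπ : π ∈ Γ) (v : V) :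
    SwitchEquiv Γ c (switchAt c π v) :=
  .single ⟨π, hπ, v, rfl⟩

theorem trans {c c' c'' : Sym2 V → K} (h : SwitchEquiv Γ c c') (h' : SwitchEquiv Γ c' c'') :
    SwitchEquiv Γ c c'' :=
  Relation.ReflTransGen.trans h h'

end SwitchEquiv

open scoped commutatorElement

section Commutator

variable {V K : Type*} [DecidableEq V]

theorem switchAt_commutator (c : Sym2 V → K) {u v : V} (huv : u ≠ v) (g h : Equiv.Perm K) :
    switchAt (switchAt (switchAt (switchAt c h⁻¹ v) g⁻¹ u) h v) g u =
      Function.update c s(u, v) (⁅g, h⁆ (c s(u, v))) := by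
  funext s
  by_cases hs : s = s(u, v)
  · subst hs
    simp [switchAt, commutatorElement_def]
  · rw [Function.update_of_ne hs]
    by_cases hu : u ∈ s <;> by_cases hv : v ∈ s
    · exact absurd (Sym2.eq_of_ne_mem huv hu hv (Sym2.mem_mk_left u v) (Sym2.mem_mk_right u v)) hs
    all_goals simp [switchAt, hu, hv]

theorem SwitchEquiv.update_commutator {Γ : Subgroup (Equiv.Perm K)} (c : Sym2 V → K) {u v : V}
    (huv : u ≠ v) {g h : Equiv.Perm K} (hg : g ∈ Γ) (hh : h ∈ Γ) :
    SwitchEquiv Γ c (Function.update c s(u, v) (⁅g, h⁆ (c s(u, v)))) := by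
  rw [← switchAt_commutator c huv g h]
  exact (((single_switchAt (inv_mem hh) v).trans (single_switchAt (inv_mem hg) u)).trans
    (single_switchAt hh v)).trans (single_switchAt hg u)

end Commutator

/-- For `x ≠ i`, take distinct `z, w ∉ {x, i}` and the 3-cycles `g = (z i x)`, `h = (i z w)`. -/
theorem exists_commutator_apply_eq {α : Type*} [DecidableEq α] [Fintype α]
    (hα : 4 ≤ Fintype.card α) (x i : α) :
    ∃ g ∈ alternatingGroup α, ∃ h ∈ alternatingGroup α, ⁅g, h⁆ x = i := by
  obtain rfl | hxi := eq_or_ne x i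
  · exact ⟨1, one_mem _, 1, one_mem _, by simp⟩
  have hcompl : 1 < ({x, i}ᶜ : Finset α).card := by
    have := Finset.card_le_two (a := x) (b := i)
    rw [Finset.card_compl]
    omega
  obtain ⟨z, hz, w, hw, hzw⟩ := Finset.one_lt_card.mp hcompl
  simp only [Finset.mem_compl, Finset.mem_insert, Finset.mem_singleton, not_or] at hz hw
  obtain ⟨hzx, hzi⟩ := hz
  obtain ⟨hwx, hwi⟩ := hw
  refine ⟨Equiv.swap z x * Equiv.swap z i, ?_, Equiv.swap i w * Equiv.swap i z, ?_, ?_⟩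
  · simp [Equiv.Perm.mem_alternatingGroup, Equiv.Perm.sign_swap hzx, Equiv.Perm.sign_swap hzi]
  · simp [Equiv.Perm.mem_alternatingGroup, Equiv.Perm.sign_swap (Ne.symm hwi),
      Equiv.Perm.sign_swap (Ne.symm hzi)]
  · simp [commutatorElement_def, Equiv.swap_apply_def, hxi, hzi, hzw,
      Ne.symm hxi, Ne.symm hzx, Ne.symm hzi, Ne.symm hwx]

section Alternating

variable {V α : Type*} [DecidableEq V] [DecidableEq α] [Fintype α]

theorem switchEquiv_alternatingGroup_update (hα : 4 ≤ Fintype.card α) (c : Sym2 V → α)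
    {s : Sym2 V} (hs : ¬ s.IsDiag) (i : α) :
    SwitchEquiv (alternatingGroup α) c (Function.update c s i) := by
  induction s using Sym2.ind with
  | _ u v =>
    obtain ⟨g, hg, h, hh, hgh⟩ := exists_commutator_apply_eq hα (c s(u, v)) i
    simpa [hgh] using SwitchEquiv.update_commutator c (Sym2.mk_isDiag_iff.not.mp hs) hg hh

theorem switchEquiv_alternatingGroup_piecewise (hα : 4 ≤ Fintype.card α) (c : Sym2 V → α)
    (i : α) (E : Finset (Sym2 V)) (hE : ∀ s ∈ E, ¬ s.IsDiag) :
    SwitchEquiv (alternatingGroup α) c (E.piecewise (fun _ => i) c) := by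
  induction E using Finset.induction_on with
  | empty => rw [Finset.piecewise_empty]; exact Relation.ReflTransGen.refl
  | insert e E _ ih =>
    rw [Finset.piecewise_insert]
    exact (ih fun s hs => hE s (Finset.mem_insert_of_mem hs)).trans
      (switchEquiv_alternatingGroup_update hα _ (hE e (Finset.mem_insert_self e E)) i)

theorem exists_switchEquiv_alternatingGroup_hasMonoK [Fintype V] (hα : 4 ≤ Fintype.card α)
    (c : Sym2 V → α) (i : α) :
    ∃ c', SwitchEquiv (alternatingGroup α) c c' ∧ HasMonoK c' i (Fintype.card V) := by
  refine ⟨_, switchEquiv_alternatingGroup_piecewise hα c i {s | ¬ s.IsDiag} (by simp),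
    Finset.univ, Finset.card_univ, fun x _ y _ hxy => ?_⟩
  simp [Finset.piecewise, hxy]

end Alternating

theorem HasMonoK.le_card {V K : Type*} [Fintype V] {c : Sym2 V → K} {i : K} {t : ℕ}
    (h : HasMonoK c i t) : t ≤ Fintype.card V := by
  obtain ⟨S, rfl, -⟩ := h
  exact S.card_le_univ

theorem stmt6_general (m : ℕ) (hm : 4 ≤ m) (a : Fin m → ℕ) :
    IsLeast {n : ℕ | ∀ c : Sym2 (Fin n) → Fin m,
      ∃ c', SwitchEquiv (alternatingGroup (Fin m)) c c' ∧
        ∃ i : Fin m, HasMonoK c' i (a i)} (⨅ i, a i) := by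
  have : Nonempty (Fin m) := ⟨⟨0, by omega⟩⟩
  obtain ⟨i₀, hi₀⟩ := exists_eq_ciInf_of_finite (f := a)
  refine ⟨fun c => ?_, fun n hn => ?_⟩
  · obtain ⟨c', hc', hmono⟩ :=
      exists_switchEquiv_alternatingGroup_hasMonoK (by simpa using hm) c i₀
    exact ⟨c', hc', i₀, by simpa [hi₀] using hmono⟩
  · obtain ⟨_, -, i, hi⟩ := hn fun _ => i₀
    calc ⨅ j, a j ≤ a i := ciInf_le (OrderBot.bddBelow _) i
      _ ≤ n := by simpa using hi.le_card

/-- For the alternating group `A_m` (m ≥ 4), the `A_m`-switch Ramsey number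
`R_{A_m}(a₁,…,a_m)` equals `min_i a i`. -/
theorem stmt6 (m : ℕ) (hm : 4 ≤ m) (a : Fin m → ℕ) (ha : ∀ i, 2 ≤ a i) :
    IsLeast {n : ℕ | ∀ c : Sym2 (Fin n) → Fin m,
      ∃ c', SwitchEquiv (alternatingGroup (Fin m)) c c' ∧
        ∃ i : Fin m, HasMonoK c' i (a i)} (⨅ i, a i) :=
  stmt6_general m hm a
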